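/- Fix real θ > 0, α > −1, an integer n ≥ 1 and x_1,…,x_n > 0. Then the scaled n-point correlation function of the N-point biorthogonal Jacobi ensemble converges: lim_{N→∞} N^{−n(1+1/θ)} · ∏_{i=1}^n (x_i N^{−(1+1/θ)})^α · det[K_N^{Jac}(x_i N^{−(1+1/θ)}, x_j N^{−(1+1/θ)})]_{i,j=1}^n = ∏_{i=1}^n x_i^α · det[𝒦^{(α,θ)}(x_i,x_j)]_{i,j=1}^n. -/

import Mathlib

/-!
After the substitution `x ↦ x N^{-(1+1/θ)}`, the `(k, l)` term of `N^{-(1+1/θ)(1+α)} K_N` is the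
`(k, l)` term of the double series for `𝒦^{(α,θ)}` multiplied by two ratios
`Γ(a + N) / ((N-1-k)! N^{a+k})`, with `a = (α+1+k)/θ`, resp. `a = α+1+θl`. By Euler's limit
formula each ratio tends to `1`, and log-convexity of `Γ` bounds it by `C^{k+1}` uniformly in `N`,
which the factorials in the series absorb. Dominated convergence for series gives the entrywise
limit of the rescaled kernel matrix; the prefactors are exactly this rescaling of every entry, and
the determinant is continuous.
-/

/-- The Christoffel–Darboux kernel of the `N`-point biorthogonal Jacobi ensemble
(zero-based summation indices). -/
noncomputable def KJac (α θ : ℝ) (N : ℕ) (x y : ℝ) : ℝ :=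
  θ * ∑ k ∈ Finset.range N, ∑ l ∈ Finset.range N,
    ((ascPochhammer ℝ N).eval (((k : ℝ) + 1 + α) / θ) * x ^ k /
        ((Nat.factorial k : ℝ) * (Nat.factorial (N - 1 - k) : ℝ))) *
      ((ascPochhammer ℝ N).eval (θ * (l : ℝ) + α + 1) * y ^ (θ * (l : ℝ)) /
        ((Nat.factorial l : ℝ) * (Nat.factorial (N - 1 - l) : ℝ))) *
      ((-1) ^ (k + l) / ((k : ℝ) + 1 + θ * (l : ℝ) + α))

/-- The limit kernel `𝒦^{(α,θ)}(x,y)` of the biorthogonal Jacobi/Laguerre ensembles. -/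
noncomputable def limitKernel (α θ x y : ℝ) : ℝ :=
  ∑' k : ℕ, ∑' l : ℕ,
    ((-1) ^ k * x ^ k / ((Nat.factorial k : ℝ) * Real.Gamma ((α + 1 + k) / θ))) *
      ((-1) ^ l * y ^ (θ * (l : ℝ)) /
        ((Nat.factorial l : ℝ) * Real.Gamma (α + 1 + θ * l))) *
      (θ / (α + 1 + k + θ * l))

open Real Filter Topology Nat

theorem ascPochhammer_eval_eq_prod {R : Type*} [CommSemiring R] (a : R) (n : ℕ) :
    (ascPochhammer R n).eval a = ∏ j ∈ Finset.range n, (a + j) := by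
  induction n with
  | zero => simp
  | succ n ih => simp [ascPochhammer_succ_right, Finset.prod_range_succ, ih]

namespace Real

theorem Gamma_add_nat_eq_mul_prod {a : ℝ} (ha : 0 < a) (n : ℕ) :
    Gamma (a + n) = Gamma a * ∏ j ∈ Finset.range n, (a + j) := by
  induction n with
  | zero => simp
  | succ n ih =>
    rw [Nat.cast_succ, ← add_assoc, Gamma_add_one (by positivity), ih, Finset.prod_range_succ]
    ring

theorem Gamma_add_le_mul_rpow_of_le_one {x s : ℝ} (hx : 0 < x) (hs₀ : 0 ≤ s) (hs₁ : s ≤ 1) :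
    Gamma (x + s) ≤ Gamma x * x ^ s := by
  have hΓ := Gamma_pos_of_pos hx
  have h := convexOn_log_Gamma.2 (Set.mem_Ioi.2 hx) (Set.mem_Ioi.2 (by linarith : 0 < x + 1))
    (by linarith : 0 ≤ 1 - s) hs₀ (by ring)
  simp only [smul_eq_mul, Function.comp_apply, Gamma_add_one hx.ne', log_mul hx.ne' hΓ.ne',
    show (1 - s) * x + s * (x + 1) = x + s by ring] at h
  rw [← log_le_log_iff (Gamma_pos_of_pos (by linarith)) (by positivity),
    log_mul hΓ.ne' (by positivity), log_rpow hx]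
  linarith

theorem Gamma_add_le_mul_rpow {x s : ℝ} (hx : 0 < x) (hs : 0 ≤ s) :
    Gamma (x + s) ≤ Gamma x * (x + s) ^ s := by
  suffices ∀ n : ℕ, ∀ x s : ℝ, 0 < x → 0 ≤ s → s ≤ n → Gamma (x + s) ≤ Gamma x * (x + s) ^ s from
    this ⌈s⌉₊ x s hx hs (Nat.le_ceil s)
  intro n
  induction n with
  | zero =>
    intro x s hx hs₀ hs
    obtain rfl : s = 0 := le_antisymm (by simpa using hs) hs₀
    simp
  | succ n ih =>
    intro x s hx hs₀ hs
    rcases le_or_gt s 1 with hs₁ | hs₁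
    · calc Gamma (x + s) ≤ Gamma x * x ^ s := Gamma_add_le_mul_rpow_of_le_one hx hs₀ hs₁
        _ ≤ Gamma x * (x + s) ^ s := by gcongr; linarith
    · have h := ih (x + 1) (s - 1) (by linarith) (by linarith) (by push_cast at hs; linarith)
      rw [Gamma_add_one hx.ne', show x + 1 + (s - 1) = x + s by ring] at h
      calc Gamma (x + s) ≤ x * Gamma x * (x + s) ^ (s - 1) := h
        _ ≤ (x + s) * Gamma x * (x + s) ^ (s - 1) := by gcongr; linarith
        _ = Gamma x * (x + s) ^ s := by
          rw [rpow_sub (by linarith), rpow_one]; field_simp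

theorem tendsto_Gamma_add_nat_add_one_div_rpow_mul_factorial {c : ℝ} (hc : 0 < c) :
    Tendsto (fun m : ℕ => Gamma (c + m + 1) / ((m : ℝ) ^ c * m !)) atTop (𝓝 1) := by
  have hΓ : Gamma c ≠ 0 := (Gamma_pos_of_pos hc).ne'
  have h := (tendsto_const_nhds (x := Gamma c)).div (GammaSeq_tendsto_Gamma c) hΓ
  rw [div_self hΓ] at h
  refine h.congr' ?_
  filter_upwards [eventually_ne_atTop 0] with m hm
  have hprod : Gamma (c + m + 1) = Gamma c * ∏ j ∈ Finset.range (m + 1), (c + j) := by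
    rw [add_assoc, ← Nat.cast_add_one, Gamma_add_nat_eq_mul_prod hc]
  simp only [Pi.div_apply, GammaSeq, hprod]
  have : (0 : ℝ) < ∏ j ∈ Finset.range (m + 1), (c + j) := Finset.prod_pos fun j _ => by positivity
  have : (0 : ℝ) < (m : ℝ) ^ c := by positivity
  field_simp

theorem Gamma_natCast_sub_natCast {k N : ℕ} (hk : k < N) : Gamma ((N : ℝ) - k) = (N - 1 - k)! := by
  rw [← Gamma_nat_eq_factorial, Nat.cast_sub (by omega), Nat.cast_sub (by omega)]
  push_cast; ring_nf

end Real

theorem tendsto_natCast_sub_div_atTop (j : ℕ) :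
    Tendsto (fun N : ℕ => ((N - j : ℕ) : ℝ) / N) atTop (𝓝 1) := by
  have h : Tendsto (fun N : ℕ => 1 - (j : ℝ) / N) atTop (𝓝 1) := by
    simpa using tendsto_const_nhds.sub (tendsto_const_div_atTop_nhds_zero_nat (j : ℝ))
  refine h.congr' ?_
  filter_upwards [eventually_ge_atTop (j + 1)] with N hN
  rw [Nat.cast_sub (by omega), sub_div, div_self (by norm_cast; omega)]

noncomputable def gammaRatio (a : ℝ) (k N : ℕ) : ℝ :=
  Gamma (a + N) / ((N - 1 - k)! * (N : ℝ) ^ (a + k))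

section GammaRatio

variable {a : ℝ}

theorem gammaRatio_nonneg (ha : 0 < a) (k N : ℕ) : 0 ≤ gammaRatio a k N := by
  unfold gammaRatio; positivity

theorem tendsto_gammaRatio (ha : 0 < a) (k : ℕ) :
    Tendsto (gammaRatio a k) atTop (𝓝 1) := by
  have hc : 0 < a + k := by positivity
  have h := ((tendsto_Gamma_add_nat_add_one_div_rpow_mul_factorial hc).comp
    (tendsto_sub_atTop_nat (k + 1))).mul
    ((tendsto_natCast_sub_div_atTop (k + 1)).rpow_const (Or.inr hc.le))
  rw [one_rpow, mul_one] at h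
  refine h.congr' ?_
  filter_upwards [eventually_ge_atTop (k + 2)] with N hN
  have hM : (0 : ℝ) < (N - 1 - k : ℕ) := by norm_cast; omega
  have hN : (0 : ℝ) < N := by norm_cast; omega
  have harg : a + k + ((N - 1 - k : ℕ) : ℝ) + 1 = a + N := by
    rw [Nat.cast_sub (by omega), Nat.cast_sub (by omega)]; push_cast; ring
  rw [Function.comp_apply, show N - (k + 1) = N - 1 - k by omega, harg,
    div_rpow hM.le hN.le, gammaRatio]
  have : (0 : ℝ) < ((N - 1 - k : ℕ) : ℝ) ^ (a + k) := by positivity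
  field_simp

theorem gammaRatio_le {c : ℝ} {k N : ℕ} (ha : 0 < a) (hac : a ≤ c * (k + 1)) (hk : k < N) :
    gammaRatio a k N ≤ ((1 + c) ^ (c + 1)) ^ (k + 1) := by
  have hN : (0 : ℝ) < N := by norm_cast; omega
  have hkN : (k : ℝ) + 1 ≤ N := by norm_cast
  have hc : 0 ≤ c := nonneg_of_mul_nonneg_left (ha.le.trans hac) (by positivity)
  have hNk : 0 < (N : ℝ) - k := by linarith
  have hΓ : Gamma (a + N) ≤ Gamma ((N : ℝ) - k) * (a + N) ^ (a + k) := by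
    simpa only [show (N : ℝ) - k + (a + k) = a + N by ring] using
      Gamma_add_le_mul_rpow hNk (by positivity : 0 ≤ a + k)
  have hbase : (a + N) / N ≤ 1 + c := by
    rw [add_div, div_self hN.ne', add_comm, add_le_add_iff_left, div_le_iff₀ hN]
    nlinarith
  calc gammaRatio a k N ≤ ((a + N) / N) ^ (a + k) := by
        have := Gamma_pos_of_pos hNk
        rw [gammaRatio, ← Gamma_natCast_sub_natCast hk, div_rpow (by positivity) hN.le,
          div_le_div_iff₀ (by positivity) (by positivity)]
        calc Gamma (a + N) * (N : ℝ) ^ (a + k)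
            ≤ Gamma ((N : ℝ) - k) * (a + N) ^ (a + k) * (N : ℝ) ^ (a + k) := by gcongr
          _ = _ := by ring
    _ ≤ (1 + c) ^ (a + k) := by gcongr
    _ ≤ (1 + c) ^ ((c + 1) * (k + 1)) := by
        apply rpow_le_rpow_of_exponent_le (by linarith)
        nlinarith
    _ = ((1 + c) ^ (c + 1)) ^ (k + 1) := by
        rw [rpow_mul (by positivity), ← rpow_natCast]; push_cast; rfl

theorem ascPochhammer_eval_eq_gammaRatio {k N : ℕ} (ha : 0 < a) (hk : k < N) :
    (ascPochhammer ℝ N).eval a =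
      gammaRatio a k N * ((N - 1 - k)! * (N : ℝ) ^ (a + k)) / Gamma a := by
  have hN : (0 : ℝ) < N := by norm_cast; omega
  have := Gamma_pos_of_pos ha
  rw [gammaRatio, Gamma_add_nat_eq_mul_prod ha, ascPochhammer_eval_eq_prod]
  field_simp

end GammaRatio

noncomputable def limitKernelTerm (α θ x y : ℝ) (p : ℕ × ℕ) : ℝ :=
  ((-1) ^ p.1 * x ^ p.1 / ((p.1 ! : ℝ) * Gamma ((α + 1 + p.1) / θ))) *
    ((-1) ^ p.2 * y ^ (θ * (p.2 : ℝ)) / ((p.2 ! : ℝ) * Gamma (α + 1 + θ * p.2))) *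
    (θ / (α + 1 + p.1 + θ * p.2))

theorem limitKernel_eq_tsum {α θ x y : ℝ} (h : Summable (limitKernelTerm α θ x y)) :
    limitKernel α θ x y = ∑' p, limitKernelTerm α θ x y p :=
  (h.tsum_prod' h.prod_factor).symm

noncomputable def scaledKernelTerm (α θ x y : ℝ) (N : ℕ) (p : ℕ × ℕ) : ℝ :=
  if p.1 < N ∧ p.2 < N then
    gammaRatio ((α + 1 + p.1) / θ) p.1 N * gammaRatio (α + 1 + θ * p.2) p.2 N *
      limitKernelTerm α θ x y p
  else 0

theorem summable_pow_div_factorial_mul_pow_div_factorial (A B : ℝ) :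
    Summable (fun p : ℕ × ℕ => A ^ p.1 / p.1 ! * (B ^ p.2 / p.2 !)) := by
  refine summable_mul_of_summable_norm (f := fun k : ℕ => A ^ k / k !)
    (g := fun l : ℕ => B ^ l / l !) ?_ ?_ <;>
  simpa only [norm_div, norm_pow, Real.norm_natCast] using Real.summable_pow_div_factorial _

section Kernel

variable {α θ : ℝ} (hθ : 0 < θ) (hα : -1 < α)
include hθ hα

theorem KJac_summand_scaled_eq {x y : ℝ} (hy : 0 ≤ y) {N k l : ℕ} (hk : k < N) (hl : l < N) :
    ((N : ℝ) ^ (-(1 + 1 / θ))) ^ (1 + α) * θ *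
      ((ascPochhammer ℝ N).eval (((k : ℝ) + 1 + α) / θ) * (x * (N : ℝ) ^ (-(1 + 1 / θ))) ^ k /
          ((k ! : ℝ) * ((N - 1 - k)! : ℝ)) *
        ((ascPochhammer ℝ N).eval (θ * (l : ℝ) + α + 1) *
            (y * (N : ℝ) ^ (-(1 + 1 / θ))) ^ (θ * (l : ℝ)) /
          ((l ! : ℝ) * ((N - 1 - l)! : ℝ))) *
        ((-1) ^ (k + l) / ((k : ℝ) + 1 + θ * (l : ℝ) + α))) =
      scaledKernelTerm α θ x y N (k, l) := by
  have hN : (0 : ℝ) < N := by norm_cast; omega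
  set a := (α + 1 + k) / θ with ha_def
  set b := α + 1 + θ * l with hb_def
  have hk0 : (0 : ℝ) ≤ k := k.cast_nonneg
  have hl0 : 0 ≤ θ * l := by positivity
  have ha : 0 < a := div_pos (by linarith) hθ
  have hb : 0 < b := by linarith
  set s := (N : ℝ) ^ (-(1 + 1 / θ)) with hs_def
  have hs : 0 < s := by positivity
  set P := s ^ (1 + α) * ((N : ℝ) ^ (a + k) * s ^ k) * ((N : ℝ) ^ (b + l) * s ^ (θ * l)) with hP
  have hP_one : P = 1 := by
    simp only [hP, hs_def, ← rpow_natCast, ← rpow_mul hN.le, ← rpow_add hN]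
    convert rpow_zero (N : ℝ) using 2
    rw [ha_def, hb_def]
    field_simp
    ring
  have := Gamma_pos_of_pos ha
  have := Gamma_pos_of_pos hb
  have : 0 < α + 1 + k + θ * l := by linarith
  calc _ = scaledKernelTerm α θ x y N (k, l) * P := by
        rw [hP, scaledKernelTerm, if_pos ⟨hk, hl⟩, limitKernelTerm, ← ha_def, ← hb_def,
          show ((k : ℝ) + 1 + α) / θ = a by ring, show θ * (l : ℝ) + α + 1 = b by ring,
          show (k : ℝ) + 1 + θ * l + α = α + 1 + k + θ * l by ring,
          ascPochhammer_eval_eq_gammaRatio ha hk, ascPochhammer_eval_eq_gammaRatio hb hl,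
          mul_pow, mul_rpow hy hs.le]
        field_simp
        ring
    _ = _ := by rw [hP_one, mul_one]

theorem scaled_KJac_eq_tsum {x y : ℝ} (hy : 0 ≤ y) (N : ℕ) :
    ((N : ℝ) ^ (-(1 + 1 / θ))) ^ (1 + α) *
        KJac α θ N (x * (N : ℝ) ^ (-(1 + 1 / θ))) (y * (N : ℝ) ^ (-(1 + 1 / θ))) =
      ∑' p, scaledKernelTerm α θ x y N p := by
  have hsupp : ∀ p ∉ Finset.range N ×ˢ Finset.range N, scaledKernelTerm α θ x y N p = 0 := by
    intro p hp
    rw [Finset.mem_product, Finset.mem_range, Finset.mem_range] at hp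
    rw [scaledKernelTerm, if_neg hp]
  rw [tsum_eq_sum hsupp, Finset.sum_product, KJac, ← mul_assoc, Finset.mul_sum]
  refine Finset.sum_congr rfl fun k hk => ?_
  rw [Finset.mul_sum]
  exact Finset.sum_congr rfl fun l hl =>
    KJac_summand_scaled_eq hθ hα hy (Finset.mem_range.1 hk) (Finset.mem_range.1 hl)

theorem tendsto_scaledKernelTerm (x y : ℝ) (p : ℕ × ℕ) :
    Tendsto (fun N => scaledKernelTerm α θ x y N p) atTop (𝓝 (limitKernelTerm α θ x y p)) := by
  have hk0 : (0 : ℝ) ≤ p.1 := p.1.cast_nonneg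
  have hl0 : 0 ≤ θ * p.2 := by positivity
  have h := ((tendsto_gammaRatio (a := (α + 1 + p.1) / θ) (div_pos (by linarith) hθ) p.1).mul
    (tendsto_gammaRatio (a := α + 1 + θ * p.2) (by linarith) p.2)).mul_const
    (limitKernelTerm α θ x y p)
  rw [one_mul, one_mul] at h
  refine h.congr' ?_
  filter_upwards [eventually_gt_atTop (max p.1 p.2)] with N hN
  rw [scaledKernelTerm, if_pos (max_lt_iff.1 hN)]

theorem exists_abs_limitKernelTerm_le {x y : ℝ} (hx : 0 ≤ x) (hy : 0 ≤ y) :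
    ∃ C, 0 ≤ C ∧ ∀ p : ℕ × ℕ,
      |limitKernelTerm α θ x y p| ≤ C * (x ^ p.1 / p.1 ! * ((y ^ θ) ^ p.2 / p.2 !)) := by
  obtain ⟨t₀, ht₀, hmin⟩ := exists_isMinOn_Gamma_Ioi
  have hm : 0 < Gamma t₀ := Gamma_pos_of_pos (by linarith [ht₀.1])
  have hα1 : 0 < α + 1 := by linarith
  refine ⟨θ / (α + 1) / Gamma t₀ / Gamma t₀, by positivity, fun ⟨k, l⟩ => ?_⟩
  have hk0 : (0 : ℝ) ≤ k := k.cast_nonneg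
  have hl0 : 0 ≤ θ * l := by positivity
  have ha : 0 < (α + 1 + k) / θ := div_pos (by linarith) hθ
  have hb : 0 < α + 1 + θ * l := by linarith
  have hΓa : Gamma t₀ ≤ Gamma ((α + 1 + k) / θ) := hmin ha
  have hΓb : Gamma t₀ ≤ Gamma (α + 1 + θ * l) := hmin hb
  have hyl : y ^ (θ * (l : ℝ)) = (y ^ θ) ^ l := by rw [rpow_mul hy, rpow_natCast]
  have hfactor : ∀ (j : ℕ) {t G : ℝ}, 0 ≤ t → Gamma t₀ ≤ G →
      |(-1) ^ j * t / (j ! * G)| ≤ t / j ! / Gamma t₀ := by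
    intro j t G ht hG
    rw [abs_div, abs_mul, abs_pow, abs_neg, abs_one, one_pow, one_mul, abs_of_nonneg ht,
      abs_of_pos (mul_pos (by positivity) (hm.trans_le hG)), div_div]
    gcongr
  have hden : |θ / (α + 1 + k + θ * l)| ≤ θ / (α + 1) := by
    rw [abs_of_pos (div_pos hθ (by linarith))]
    exact div_le_div_of_nonneg_left hθ.le hα1 (by linarith)
  rw [limitKernelTerm, abs_mul, abs_mul]
  calc _ ≤ x ^ k / k ! / Gamma t₀ * ((y ^ θ) ^ l / l ! / Gamma t₀) * (θ / (α + 1)) := by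
        refine mul_le_mul (mul_le_mul (hfactor k (by positivity) hΓa) ?_ (abs_nonneg _)
          (by positivity)) hden (abs_nonneg _) (by positivity)
        exact hyl ▸ hfactor l (by positivity) hΓb
    _ = _ := by ring

theorem exists_abs_scaledKernelTerm_le {x y : ℝ} (hx : 0 ≤ x) (hy : 0 ≤ y) :
    ∃ C A B, ∀ N (p : ℕ × ℕ),
      |scaledKernelTerm α θ x y N p| ≤ C * (A ^ p.1 / p.1 ! * (B ^ p.2 / p.2 !)) := by
  obtain ⟨C, hC, hbound⟩ := exists_abs_limitKernelTerm_le hθ hα hx hy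
  set R₁ := (1 + (|α| + 1) / θ) ^ ((|α| + 1) / θ + 1)
  set R₂ := (1 + (|α| + 1 + θ)) ^ (|α| + 1 + θ + 1)
  have hR₁ : 0 ≤ R₁ := by positivity
  have hR₂ : 0 ≤ R₂ := by positivity
  refine ⟨C * R₁ * R₂, R₁ * x, R₂ * y ^ θ, fun N ⟨k, l⟩ => ?_⟩
  have hk0 : (0 : ℝ) ≤ k := k.cast_nonneg
  have hl0 : 0 ≤ θ * l := by positivity
  have hα' : α ≤ |α| := le_abs_self α
  by_cases hkl : k < N ∧ l < N
  · have hU := gammaRatio_le (c := (|α| + 1) / θ) (a := (α + 1 + k) / θ)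
      (div_pos (by linarith) hθ) (by rw [div_mul_eq_mul_div]; gcongr; nlinarith [abs_nonneg α])
      hkl.1
    have hV := gammaRatio_le (c := |α| + 1 + θ) (a := α + 1 + θ * l) (by linarith) (by
      nlinarith [abs_nonneg α]) hkl.2
    rw [scaledKernelTerm, if_pos hkl, abs_mul, abs_mul,
      abs_of_nonneg (gammaRatio_nonneg (div_pos (by linarith) hθ) _ _),
      abs_of_nonneg (gammaRatio_nonneg (by linarith) _ _)]
    calc _ ≤ R₁ ^ (k + 1) * R₂ ^ (l + 1) * (C * (x ^ k / k ! * ((y ^ θ) ^ l / l !))) := by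
          refine mul_le_mul (mul_le_mul hU hV (gammaRatio_nonneg (by linarith) _ _) (by positivity))
            (hbound (k, l)) (abs_nonneg _) (by positivity)
      _ = _ := by ring
  · rw [scaledKernelTerm, if_neg hkl, abs_zero]
    positivity

theorem tendsto_scaled_KJac {x y : ℝ} (hx : 0 ≤ x) (hy : 0 ≤ y) :
    Tendsto (fun N : ℕ => ((N : ℝ) ^ (-(1 + 1 / θ))) ^ (1 + α) *
        KJac α θ N (x * (N : ℝ) ^ (-(1 + 1 / θ))) (y * (N : ℝ) ^ (-(1 + 1 / θ))))
      atTop (𝓝 (limitKernel α θ x y)) := by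
  obtain ⟨C, A, B, hbound⟩ := exists_abs_scaledKernelTerm_le hθ hα hx hy
  have hsum := (summable_pow_div_factorial_mul_pow_div_factorial A B).mul_left C
  have hlim : Summable (limitKernelTerm α θ x y) := .of_norm_bounded hsum fun p =>
    le_of_tendsto (tendsto_scaledKernelTerm hθ hα x y p).norm (.of_forall fun N => hbound N p)
  simp only [scaled_KJac_eq_tsum hθ hα hy, limitKernel_eq_tsum hlim]
  exact tendsto_tsum_of_dominated_convergence hsum (tendsto_scaledKernelTerm hθ hα x y)
    (.of_forall hbound)

end Kernel

theorem pow_mul_prod_mul_rpow_mul_det {n : ℕ} {α s : ℝ} (hs : 0 < s) {x : Fin n → ℝ}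
    (hx : ∀ i, 0 ≤ x i) (M : Matrix (Fin n) (Fin n) ℝ) :
    s ^ n * (∏ i, (x i * s) ^ α) * M.det = (∏ i, x i ^ α) * (s ^ (1 + α) • M).det := by
  rw [Matrix.det_smul, Fintype.card_fin, rpow_add hs, rpow_one, mul_pow,
    Finset.prod_congr rfl fun i _ => mul_rpow (hx i) hs.le, Finset.prod_mul_distrib,
    Finset.prod_const, Finset.card_univ, Fintype.card_fin]
  ring

theorem jacobi_scaling_limit (θ α : ℝ) (hθ : 0 < θ) (hα : -1 < α)
    (n : ℕ) (x : Fin n → ℝ) (hx : ∀ i, 0 < x i) :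
    Filter.Tendsto
      (fun N : ℕ =>
        (N : ℝ) ^ (-(n : ℝ) * (1 + 1 / θ)) *
          (∏ i, (x i * (N : ℝ) ^ (-(1 + 1 / θ))) ^ α) *
          Matrix.det (Matrix.of fun i j : Fin n =>
            KJac α θ N (x i * (N : ℝ) ^ (-(1 + 1 / θ)))
              (x j * (N : ℝ) ^ (-(1 + 1 / θ)))))
      Filter.atTop
      (nhds ((∏ i, x i ^ α) *
        Matrix.det (Matrix.of fun i j : Fin n => limitKernel α θ (x i) (x j)))) := by
  have hK : Tendsto (fun N : ℕ => ((N : ℝ) ^ (-(1 + 1 / θ))) ^ (1 + α) •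
      Matrix.of fun i j : Fin n =>
        KJac α θ N (x i * (N : ℝ) ^ (-(1 + 1 / θ))) (x j * (N : ℝ) ^ (-(1 + 1 / θ))))
      atTop (𝓝 (Matrix.of fun i j : Fin n => limitKernel α θ (x i) (x j))) :=
    tendsto_pi_nhds.2 fun i => tendsto_pi_nhds.2 fun j =>
      tendsto_scaled_KJac hθ hα (hx i).le (hx j).le
  refine ((((continuous_id.matrix_det).tendsto _).comp hK).const_mul _).congr' ?_
  filter_upwards [eventually_gt_atTop 0] with N hN
  rw [Function.comp_apply, id, ← pow_mul_prod_mul_rpow_mul_det (by positivity) fun i => (hx i).le,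
    ← rpow_natCast, ← rpow_mul (by positivity), mul_comm (-(1 + 1 / θ)), ← neg_mul_comm]
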